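/- arXiv:2508.02164 — 2 statements merged into one kernel-verified Lean document; each statement's English description precedes it below -/
import Mathlib

section
/- (Proposition 3, feasibility part) Let the buffer be ω > 0 and let (x̂′, ŷ, δ̂, λ̂, x̂) be a fixed point of the DanyRA updates with stepsizes α, β, η, γ > 0. Then x̂ = x̂′, λ̂ ⪰ 0, δ̂ ⪰ ω·1, λ̂ᵀ(δ̂ − ω·1) = 0, ∇f(x̂) + Aᵀλ̂ = 0, 𝐋λ̂ = 0, A x̂ + 𝐋 ŷ + δ̂ − d = 0, and consequently x̂ is feasible for the DRAP: Σ_{i=1}^n A_i x̂_i ⪯ Σ_{i=1}^n d_i componentwise. -/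
set_option autoImplicit false

open scoped BigOperators

noncomputable section

/-- Block-diagonal action `A x` of the stacked matrix `A = blkdiag(A_1,…,A_n)`. -/
def Amul {n m p : ℕ} (A : Fin n → Matrix (Fin m) (Fin p) ℝ)
    (x : EuclideanSpace ℝ (Fin n × Fin p)) : EuclideanSpace ℝ (Fin n × Fin m) :=
  WithLp.toLp 2 (fun q : Fin n × Fin m => ∑ k : Fin p, A q.1 q.2 k * x (q.1, k))

/-- Action of the transpose `Aᵀ v` of the stacked block-diagonal matrix. -/
def ATmul {n m p : ℕ} (A : Fin n → Matrix (Fin m) (Fin p) ℝ)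
    (v : EuclideanSpace ℝ (Fin n × Fin m)) : EuclideanSpace ℝ (Fin n × Fin p) :=
  WithLp.toLp 2 (fun q : Fin n × Fin p => ∑ j : Fin m, A q.1 j q.2 * v (q.1, j))

/-- Action of `𝐋 = 𝓛 ⊗ I_m` on a stacked vector `u ∈ ℝ^{nm}`. -/
def Lmul {n m : ℕ} (L : Matrix (Fin n) (Fin n) ℝ)
    (u : EuclideanSpace ℝ (Fin n × Fin m)) : EuclideanSpace ℝ (Fin n × Fin m) :=
  WithLp.toLp 2 (fun q : Fin n × Fin m => ∑ l : Fin n, L q.1 l * u (l, q.2))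

/-- The constant stacked vector `ω·1 ∈ ℝ^{nm}`. -/
def constVec {n m : ℕ} (ω : ℝ) : EuclideanSpace ℝ (Fin n × Fin m) := WithLp.toLp 2 (fun _ => ω)

/-- The stacked objective `f(x) = ∑ i f_i(x_i)`. -/
def stackF {n p : ℕ} (f : Fin n → EuclideanSpace ℝ (Fin p) → ℝ)
    (x : EuclideanSpace ℝ (Fin n × Fin p)) : ℝ :=
  ∑ i : Fin n, f i (WithLp.toLp 2 (fun k => x (i, k)))

/- At a fixed point the slack `u = ẑ − d` satisfies `u = −η A Aᵀ u` (combine the `x′`- and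
`λ`-equations), so `‖u‖² = −η ‖Aᵀu‖² ≤ 0` and `ẑ = d`. The `δ`-equation then reads
`δ̂ = max (δ̂ − α λ̂) ω` componentwise, which is exactly `λ̂ ⪰ 0`, `δ̂ ⪰ ω·1` and complementary
slackness. Since `γ > 0`, the `x`-equation forces `A x̂ + 𝐋 ŷ + δ̂ = d = A x̂′ + 𝐋 ŷ + δ̂`, so `x̂′`
is admissible in the projection defining `x̂`, whence `x̂ = x̂′`. Summing `A x̂ = d − 𝐋 ŷ − δ̂` over
the agents kills `𝐋 ŷ` and leaves `∑ A_i x̂_i = ∑ d_i − ∑ δ̂_i ⪯ ∑ d_i`. -/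

open scoped Matrix RealInnerProductSpace

theorem eq_zero_of_eq_smul_apply_neg_adjoint {E F : Type*}
    [NormedAddCommGroup E] [InnerProductSpace ℝ E] [NormedAddCommGroup F] [InnerProductSpace ℝ F]
    {S : E → F} {T : F → E} (hST : ∀ x v, ⟪S x, v⟫ = ⟪x, T v⟫) {η : ℝ} (hη : 0 ≤ η) {u : F}
    (hu : u = η • S (-T u)) : u = 0 := by
  have hself : ⟪u, u⟫ = -(η * ⟪T u, T u⟫) := by
    nth_rewrite 1 [hu]
    rw [real_inner_smul_left, hST, inner_neg_left, mul_neg]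
  have hle : ⟪u, u⟫ ≤ 0 := by
    rw [hself, neg_nonpos]
    exact mul_nonneg hη real_inner_self_nonneg
  exact inner_self_eq_zero.mp (le_antisymm hle real_inner_self_nonneg)

theorem nonneg_and_le_and_mul_sub_eq_zero_of_max_sub_mul_eq {α l δ ω : ℝ} (hα : 0 < α)
    (h : max (δ - α * l) ω = δ) : 0 ≤ l ∧ ω ≤ δ ∧ l * (δ - ω) = 0 := by
  have hl : 0 ≤ l := by
    have := h ▸ le_max_left (δ - α * l) ω
    nlinarith
  refine ⟨hl, h ▸ le_max_right _ _, ?_⟩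
  rcases max_choice (δ - α * l) ω with hc | hc
  · have : l = 0 := by nlinarith
    rw [this, zero_mul]
  · rw [← h, hc, sub_self, mul_zero]

section Stacked

variable {n m p : ℕ}

theorem ATmul_add (A : Fin n → Matrix (Fin m) (Fin p) ℝ) (v w : EuclideanSpace ℝ (Fin n × Fin m)) :
    ATmul A (v + w) = ATmul A v + ATmul A w := by
  ext q
  simp [ATmul, mul_add, Finset.sum_add_distrib]

theorem inner_Amul_left (A : Fin n → Matrix (Fin m) (Fin p) ℝ)
    (x : EuclideanSpace ℝ (Fin n × Fin p)) (v : EuclideanSpace ℝ (Fin n × Fin m)) :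
    ⟪Amul A x, v⟫ = ⟪x, ATmul A v⟫ := by
  simp only [PiLp.inner_apply, RCLike.inner_apply, conj_trivial, Amul, ATmul,
    Finset.sum_mul, Finset.mul_sum, Fintype.sum_prod_type]
  refine Finset.sum_congr rfl fun i _ => ?_
  rw [Finset.sum_comm]
  exact Finset.sum_congr rfl fun k _ => Finset.sum_congr rfl fun j _ => by ring

theorem sum_Lmul_eq_zero {L : Matrix (Fin n) (Fin n) ℝ} (hL : (fun _ => 1) ᵥ* L = 0)
    (u : EuclideanSpace ℝ (Fin n × Fin m)) (j : Fin m) : ∑ i, Lmul L u (i, j) = 0 := by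
  have hcol : ∀ l, ∑ i, L i l = 0 := fun l => by
    simpa [Matrix.vecMul, dotProduct] using congrFun hL l
  simp only [Lmul, PiLp.toLp_apply]
  rw [Finset.sum_comm]
  simp [← Finset.sum_mul, hcol]

theorem sum_Amul_le_sum_of_Amul_add_Lmul_add_sub_eq_zero (A : Fin n → Matrix (Fin m) (Fin p) ℝ)
    {L : Matrix (Fin n) (Fin n) ℝ} (hL : (fun _ => 1) ᵥ* L = 0)
    {x : EuclideanSpace ℝ (Fin n × Fin p)} {y δ d : EuclideanSpace ℝ (Fin n × Fin m)}
    (hδ : ∀ q, 0 ≤ δ q) (h : Amul A x + Lmul L y + δ - d = 0) (j : Fin m) :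
    ∑ i, Amul A x (i, j) ≤ ∑ i, d (i, j) := by
  have hpt : ∀ i, Amul A x (i, j) = d (i, j) - Lmul L y (i, j) - δ (i, j) := fun i => by
    have := congrArg (· (i, j)) h
    simp only [PiLp.sub_apply, PiLp.add_apply, PiLp.zero_apply] at this
    linarith
  simp only [hpt, Finset.sum_sub_distrib, sum_Lmul_eq_zero hL]
  linarith [Finset.sum_nonneg fun i (_ : i ∈ Finset.univ) => hδ (i, j)]

end Stacked

theorem stmt_4_general {n m p : ℕ}
    (A : Fin n → Matrix (Fin m) (Fin p) ℝ)
    (d : EuclideanSpace ℝ (Fin n × Fin m))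
    (L : Matrix (Fin n) (Fin n) ℝ)
    (hLsym : L.IsSymm)
    (hLker : ∀ v : Fin n → ℝ, L.mulVec v = 0 ↔ ∃ c : ℝ, v = fun _ => c)
    (ω α η γ : ℝ) (hω : 0 < ω)
    (hα : 0 < α) (hη : 0 < η) (hγ : 0 < γ)
    -- the fixed point, with `gradF` the gradient of the stacked objective
    (xhat' xhat : EuclideanSpace ℝ (Fin n × Fin p))
    (yhat δhat lamhat : EuclideanSpace ℝ (Fin n × Fin m))
    (gradF : EuclideanSpace ℝ (Fin n × Fin p) → EuclideanSpace ℝ (Fin n × Fin p))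
    (zhat : EuclideanSpace ℝ (Fin n × Fin m))
    (hzhat : zhat = Amul A xhat' + Lmul L yhat + δhat)
    -- fixed-point conditions of the DanyRA updates with buffer ω:
    (hfix1 : gradF xhat' + ATmul A (zhat - d + lamhat) = 0)
    (hfix2 : Lmul L (zhat - d + lamhat) = 0)
    (hfix3 : (fun q => max ((δhat - α • (zhat - d + lamhat)) q) ω) = δhat)
    (hfix4 : zhat - d = η • Amul A (ATmul A lamhat + gradF xhat'))
    (hfix5mem : Amul A xhat =
      Amul A xhat - γ • (Amul A xhat + Lmul L yhat + δhat - d))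
    (hfix5min : ∀ x : EuclideanSpace ℝ (Fin n × Fin p),
      Amul A x = Amul A xhat - γ • (Amul A xhat + Lmul L yhat + δhat - d) →
      ‖xhat - xhat'‖ ≤ ‖x - xhat'‖) :
    xhat = xhat' ∧
    (∀ q, 0 ≤ lamhat q) ∧
    (∀ q, ω ≤ δhat q) ∧
    (inner ℝ lamhat (δhat - constVec ω) : ℝ) = 0 ∧
    gradF xhat + ATmul A lamhat = 0 ∧
    Lmul L lamhat = 0 ∧
    Amul A xhat + Lmul L yhat + δhat - d = 0 ∧
    (∀ j : Fin m, (∑ i : Fin n, Amul A xhat (i, j)) ≤ ∑ i : Fin n, d (i, j)) := by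
  have hz : zhat - d = 0 := by
    have hgrad : ATmul A lamhat + gradF xhat' = -ATmul A (zhat - d) := by
      rw [eq_neg_iff_add_eq_zero, ← hfix1, ATmul_add]
      abel
    exact eq_zero_of_eq_smul_apply_neg_adjoint (inner_Amul_left A) hη.le (hgrad ▸ hfix4)
  rw [hz, zero_add] at hfix1 hfix2 hfix3
  have hslack i := nonneg_and_le_and_mul_sub_eq_zero_of_max_sub_mul_eq hα
    (by simpa using congrFun hfix3 i)
  have hbal : Amul A xhat + Lmul L yhat + δhat - d = 0 :=
    (smul_eq_zero.mp (sub_eq_self.mp hfix5mem.symm)).resolve_left hγ.ne'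
  have hx : xhat = xhat' := by
    have hAx : Amul A xhat' = Amul A xhat := by
      rw [← add_right_cancel_iff (a := Lmul L yhat + δhat - d)]
      simp only [← add_sub_assoc, ← add_assoc, ← hzhat, hz, hbal]
    have := hfix5min xhat' (by rw [hbal, smul_zero, sub_zero, hAx])
    rwa [sub_self, norm_zero, norm_le_zero_iff, sub_eq_zero] at this
  have hcol : (fun _ => 1) ᵥ* L = 0 := by
    rw [← Matrix.mulVec_transpose, hLsym.eq, (hLker _).mpr ⟨1, rfl⟩]
  refine ⟨hx, fun q => (hslack q).1, fun q => (hslack q).2.1, ?_, hx ▸ hfix1, hfix2, hbal,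
    sum_Amul_le_sum_of_Amul_add_Lmul_add_sub_eq_zero A hcol
      (fun q => hω.le.trans (hslack q).2.1) hbal⟩
  simp only [PiLp.inner_apply, RCLike.inner_apply, conj_trivial, constVec, PiLp.sub_apply]
  exact Finset.sum_eq_zero fun q _ => by rw [mul_comm]; exact (hslack q).2.2

/-- Proposition 3, feasibility part: with buffer `ω > 0`, any
fixed point `(x̂′, ŷ, δ̂, λ̂, x̂)` of the DanyRA updates satisfies `x̂ = x̂′`,
`λ̂ ⪰ 0`, `δ̂ ⪰ ω·1`, `λ̂ᵀ(δ̂ − ω·1) = 0`, `∇f(x̂) + Aᵀλ̂ = 0`, `𝐋λ̂ = 0`,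
`A x̂ + 𝐋 ŷ + δ̂ − d = 0`, and consequently `x̂` is feasible for the DRAP:
`∑ᵢ Aᵢ x̂ᵢ ⪯ ∑ᵢ dᵢ` componentwise. -/
theorem stmt_4 {n m p : ℕ} (hn : 1 ≤ n) (hpm : m ≤ p)
    (f : Fin n → EuclideanSpace ℝ (Fin p) → ℝ)
    (hdiff : ∀ i, Differentiable ℝ (f i))
    (hconv : ∀ i, ConvexOn ℝ Set.univ (f i))
    (A : Fin n → Matrix (Fin m) (Fin p) ℝ)
    (hArank : ∀ i, (A i).rank = m)
    (d : EuclideanSpace ℝ (Fin n × Fin m))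
    (L : Matrix (Fin n) (Fin n) ℝ)
    (hLsym : L.IsSymm)
    (hLpsd : L.PosSemidef)
    (hLker : ∀ v : Fin n → ℝ, L.mulVec v = 0 ↔ ∃ c : ℝ, v = fun _ => c)
    (ω α β η γ : ℝ) (hω : 0 < ω)
    (hα : 0 < α) (hβ : 0 < β) (hη : 0 < η) (hγ : 0 < γ)
    -- the fixed point, with `gradF` the gradient of the stacked objective
    (xhat' xhat : EuclideanSpace ℝ (Fin n × Fin p))
    (yhat δhat lamhat : EuclideanSpace ℝ (Fin n × Fin m))
    (gradF : EuclideanSpace ℝ (Fin n × Fin p) → EuclideanSpace ℝ (Fin n × Fin p))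
    (hgradF : gradF = gradient (stackF f))
    (zhat : EuclideanSpace ℝ (Fin n × Fin m))
    (hzhat : zhat = Amul A xhat' + Lmul L yhat + δhat)
    -- fixed-point conditions of the DanyRA updates with buffer ω:
    (hfix1 : gradF xhat' + ATmul A (zhat - d + lamhat) = 0)
    (hfix2 : Lmul L (zhat - d + lamhat) = 0)
    (hfix3 : (fun q => max ((δhat - α • (zhat - d + lamhat)) q) ω) = δhat)
    (hfix4 : zhat - d = η • Amul A (ATmul A lamhat + gradF xhat'))
    (hfix5mem : Amul A xhat =
      Amul A xhat - γ • (Amul A xhat + Lmul L yhat + δhat - d))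
    (hfix5min : ∀ x : EuclideanSpace ℝ (Fin n × Fin p),
      Amul A x = Amul A xhat - γ • (Amul A xhat + Lmul L yhat + δhat - d) →
      ‖xhat - xhat'‖ ≤ ‖x - xhat'‖) :
    xhat = xhat' ∧
    (∀ q, 0 ≤ lamhat q) ∧
    (∀ q, ω ≤ δhat q) ∧
    (inner ℝ lamhat (δhat - constVec ω) : ℝ) = 0 ∧
    gradF xhat + ATmul A lamhat = 0 ∧
    Lmul L lamhat = 0 ∧
    Amul A xhat + Lmul L yhat + δhat - d = 0 ∧
    (∀ j : Fin m, (∑ i : Fin n, Amul A xhat (i, j)) ≤ ∑ i : Fin n, d (i, j)) :=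
  stmt_4_general A d L hLsym hLker ω α η γ hω hα hη hγ xhat' xhat yhat δhat lamhat gradF zhat hzhat
    hfix1 hfix2 hfix3 hfix4 hfix5mem hfix5min
end
end

section
/- (Theorem 2, part ii) Let γ ∈ (0,1) and let ω_k > 0 be buffers satisfying ω_{k+1} ≥ (1−γ)ω_k for all k. Consider sequences x_k ∈ ℝ^{np}, δ_k, y_k ∈ ℝ^{nm} satisfying, for every k ≥ 0, A x_{k+1} = A x_k − γ(A x_k + 𝐋 y_{k+1} + δ_{k+1} − d) + (1−γ)(δ_k − δ_{k+1}), and δ_{k+1} ⪰ ω_k·1 for all k ≥ 0. Suppose the coupled constraint is violated at some k₀ ≥ 1 and let C ∈ ℝ^m satisfy Σ_{i=1}^n (A_i x_{i,k₀} + δ_{i,k₀} − d_i) ⪯ C. Then for every integer t ≥ 0 with (1−γ)^{t+1}·C ⪯ n ω_{k₀+t}·1_m, the violation remains zero thereafter: Σ_{i=1}^n A_i x_{i,k} ⪯ Σ_{i=1}^n d_i componentwise for all k ≥ k₀ + t + 1. -/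
set_option autoImplicit false

open scoped BigOperators

noncomputable section

/-! The residual `r_k = A x_k + δ_k − d` satisfies
`r_{k+1} = (1 − γ) r_k − γ 𝐋 y_{k+1}`, and the block-sum kills `𝐋`, so the aggregate
residual `Σᵢ r_{i,k}` contracts geometrically: from `k₀` on it is at most `(1 − γ)^{k−k₀} C`.
The buffers decay no faster than `(1 − γ)^k`, so once `(1 − γ)^{t+1} C ⪯ n ω_{k₀+t}` the
aggregate residual stays below `n ω_{k−1} ⪯ Σᵢ δ_{i,k}`, which is exactly
`Σᵢ A_i x_{i,k} ⪯ Σᵢ d_i`. -/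

section BlockSum

variable {n m : ℕ}

def blockSum : EuclideanSpace ℝ (Fin n × Fin m) →ₗ[ℝ] Fin m → ℝ where
  toFun u j := ∑ i, u (i, j)
  map_add' u v := by
    ext j
    simp only [PiLp.add_apply, Finset.sum_add_distrib, Pi.add_apply]
  map_smul' c u := by
    ext j
    simp only [PiLp.smul_apply, smul_eq_mul, Finset.mul_sum, RingHom.id_apply, Pi.smul_apply]

@[simp]
theorem blockSum_apply (u : EuclideanSpace ℝ (Fin n × Fin m)) (j : Fin m) :
    blockSum u j = ∑ i, u (i, j) :=
  rfl

theorem blockSum_Lmul {L : Matrix (Fin n) (Fin n) ℝ} (hLcol : ∀ j, ∑ i, L i j = 0)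
    (u : EuclideanSpace ℝ (Fin n × Fin m)) : blockSum (Lmul L u) = 0 := by
  ext j
  simp only [blockSum_apply, Lmul, Pi.zero_apply]
  rw [Finset.sum_comm]
  simp only [← Finset.sum_mul, hLcol, zero_mul, Finset.sum_const_zero]

theorem residual_succ_eq {L : Matrix (Fin n) (Fin n) ℝ} {γ : ℝ}
    {a a' l δ δ' d : EuclideanSpace ℝ (Fin n × Fin m)}
    (h : a' = a - γ • (a + Lmul L l + δ' - d) + (1 - γ) • (δ - δ')) :
    a' + δ' - d = (1 - γ) • (a + δ - d) - γ • Lmul L l := by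
  rw [h]
  module

theorem blockSum_residual_succ_eq {L : Matrix (Fin n) (Fin n) ℝ} (hLcol : ∀ j, ∑ i, L i j = 0)
    {γ : ℝ} {a a' l δ δ' d : EuclideanSpace ℝ (Fin n × Fin m)}
    (h : a' = a - γ • (a + Lmul L l + δ' - d) + (1 - γ) • (δ - δ')) :
    blockSum (a' + δ' - d) = (1 - γ) • blockSum (a + δ - d) := by
  rw [residual_succ_eq h, map_sub, map_smul, map_smul, blockSum_Lmul hLcol, smul_zero, sub_zero]

theorem sum_le_sum_of_blockSum_residual_le {a δ d : EuclideanSpace ℝ (Fin n × Fin m)} {w : ℝ}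
    {j : Fin m} (hres : blockSum (a + δ - d) j ≤ n * w) (hδ : ∀ q, w ≤ δ q) :
    ∑ i, a (i, j) ≤ ∑ i, d (i, j) := by
  have hbuffer : (n : ℝ) * w ≤ ∑ i, δ (i, j) := by
    simpa using Finset.card_nsmul_le_sum Finset.univ (fun i => δ (i, j)) w fun i _ => hδ (i, j)
  simp only [blockSum_apply, PiLp.sub_apply, PiLp.add_apply, Finset.sum_sub_distrib,
    Finset.sum_add_distrib] at hres
  linarith

end BlockSum

theorem eq_pow_smul_of_succ_eq_smul {M : Type*} [Monoid M] {V : Type*} [MulAction M V]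
    {s : ℕ → V} {c : M} (h : ∀ k, s (k + 1) = c • s k) (k r : ℕ) :
    s (k + r) = c ^ r • s k := by
  induction r with
  | zero => simp
  | succ r ih => rw [← add_assoc, h, ih, pow_succ', mul_smul]

theorem pow_mul_le_of_mul_le_succ {ω : ℕ → ℝ} {c a : ℝ} (hc : 0 ≤ c)
    (hω : ∀ k, c * ω k ≤ ω (k + 1)) {k : ℕ} (ha : a ≤ ω k) (r : ℕ) :
    c ^ r * a ≤ ω (k + r) := by
  induction r with
  | zero => simpa using ha
  | succ r ih =>
    calc c ^ (r + 1) * a = c * (c ^ r * a) := by ring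
      _ ≤ c * ω (k + r) := mul_le_mul_of_nonneg_left ih hc
      _ ≤ ω (k + (r + 1)) := hω (k + r)

theorem stmt_13_general {n m p : ℕ}
    (A : Fin n → Matrix (Fin m) (Fin p) ℝ)
    (d : EuclideanSpace ℝ (Fin n × Fin m))
    (L : Matrix (Fin n) (Fin n) ℝ)
    (hLcol : ∀ j, ∑ i, L i j = 0)
    (γ : ℝ) (hγ1 : γ < 1)
    (ω : ℕ → ℝ)
    (hωdec : ∀ k, (1 - γ) * ω k ≤ ω (k + 1))
    (x : ℕ → EuclideanSpace ℝ (Fin n × Fin p))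
    (y δ : ℕ → EuclideanSpace ℝ (Fin n × Fin m))
    (hrec : ∀ k : ℕ, Amul A (x (k + 1)) =
      Amul A (x k) - γ • (Amul A (x k) + Lmul L (y (k + 1)) + δ (k + 1) - d)
        + (1 - γ) • (δ k - δ (k + 1)))
    (hδω : ∀ k : ℕ, ∀ q, ω k ≤ δ (k + 1) q)
    (k₀ : ℕ)
    (C : Fin m → ℝ)
    (hC : ∀ j : Fin m,
      (∑ i : Fin n, (Amul A (x k₀) (i, j) + δ k₀ (i, j) - d (i, j))) ≤ C j) :
    ∀ t : ℕ, (∀ j : Fin m, (1 - γ) ^ (t + 1) * C j ≤ n * ω (k₀ + t)) →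
      ∀ k : ℕ, k₀ + t + 1 ≤ k → ∀ j : Fin m,
        (∑ i : Fin n, Amul A (x k) (i, j)) ≤ ∑ i : Fin n, d (i, j) := by
  intro t ht k hk j
  obtain ⟨r, rfl⟩ : ∃ r, k = k₀ + t + r + 1 := ⟨k - (k₀ + t + 1), by omega⟩
  have hc : 0 ≤ 1 - γ := by linarith
  set res : ℕ → Fin m → ℝ := fun k => blockSum (Amul A (x k) + δ k - d)
  have hres_decay : res (k₀ + (t + r + 1)) = (1 - γ) ^ (t + r + 1) • res k₀ :=
    eq_pow_smul_of_succ_eq_smul (fun k => blockSum_residual_succ_eq hLcol (hrec k)) _ _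
  have hbuffer_decay : (1 - γ) ^ r * ((1 - γ) ^ (t + 1) * C j) ≤ n * ω (k₀ + t + r) :=
    pow_mul_le_of_mul_le_succ (ω := fun k => n * ω k) hc
      (fun k => by
        rw [mul_left_comm]; exact mul_le_mul_of_nonneg_left (hωdec k) n.cast_nonneg) (ht j) r
  refine sum_le_sum_of_blockSum_residual_le ?_ (hδω (k₀ + t + r))
  calc res (k₀ + t + r + 1) j = (1 - γ) ^ (t + r + 1) * res k₀ j := by
        rw [show k₀ + t + r + 1 = k₀ + (t + r + 1) by omega, hres_decay]; rfl
    _ ≤ (1 - γ) ^ (t + r + 1) * C j := by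
        gcongr
        exact hC j
    _ = (1 - γ) ^ r * ((1 - γ) ^ (t + 1) * C j) := by ring
    _ ≤ n * ω (k₀ + t + r) := hbuffer_decay

/-- Theorem 2, part ii: for `γ ∈ (0,1)` and buffers `ω_k > 0`
with `ω_{k+1} ≥ (1−γ)ω_k`, sequences satisfying the DanyRA decision-update
constraint and `δ_{k+1} ⪰ ω_k·1`, if the aggregate at `k₀ ≥ 1` is bounded by
`C ∈ ℝ^m`, then for every `t` with `(1−γ)^{t+1}·C ⪯ n ω_{k₀+t}·1` the
violation remains zero thereafter:
`∑ᵢ Aᵢ x_{i,k} ⪯ ∑ᵢ dᵢ` componentwise for all `k ≥ k₀ + t + 1`. -/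
theorem stmt_13 {n m p : ℕ} (hn : 1 ≤ n)
    (A : Fin n → Matrix (Fin m) (Fin p) ℝ)
    (d : EuclideanSpace ℝ (Fin n × Fin m))
    (L : Matrix (Fin n) (Fin n) ℝ)
    (hLsym : L.IsSymm)
    (hLrow : ∀ i, ∑ j, L i j = 0)
    (hLcol : ∀ j, ∑ i, L i j = 0)
    (γ : ℝ) (hγ0 : 0 < γ) (hγ1 : γ < 1)
    (ω : ℕ → ℝ) (hω : ∀ k, 0 < ω k)
    (hωdec : ∀ k, (1 - γ) * ω k ≤ ω (k + 1))
    (x : ℕ → EuclideanSpace ℝ (Fin n × Fin p))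
    (y δ : ℕ → EuclideanSpace ℝ (Fin n × Fin m))
    (hrec : ∀ k : ℕ, Amul A (x (k + 1)) =
      Amul A (x k) - γ • (Amul A (x k) + Lmul L (y (k + 1)) + δ (k + 1) - d)
        + (1 - γ) • (δ k - δ (k + 1)))
    (hδω : ∀ k : ℕ, ∀ q, ω k ≤ δ (k + 1) q)
    (k₀ : ℕ) (hk₀ : 1 ≤ k₀)
    (C : Fin m → ℝ)
    (hC : ∀ j : Fin m,
      (∑ i : Fin n, (Amul A (x k₀) (i, j) + δ k₀ (i, j) - d (i, j))) ≤ C j) :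
    ∀ t : ℕ, (∀ j : Fin m, (1 - γ) ^ (t + 1) * C j ≤ n * ω (k₀ + t)) →
      ∀ k : ℕ, k₀ + t + 1 ≤ k → ∀ j : Fin m,
        (∑ i : Fin n, Amul A (x k) (i, j)) ≤ ∑ i : Fin n, d (i, j) :=
  stmt_13_general A d L hLcol γ hγ1 ω hωdec x y δ hrec hδω k₀ C hC
end
end
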